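/- arXiv:math/0207126 — 6 statements merged into one kernel-verified Lean document; each statement's English description precedes it below -/
import Mathlib

section
/- For every integer n ≥ 4, the following identity of rational numbers holds: ∏_{k=0}^{n−4} C(n−1+k, n−3−k) / C(2k+1, k) = (1/2) · C(2n−4, n−2). -/
open scoped BigOperators

open Finset Nat

/-- superfactorial -/
def sfac : ℕ → ℕ := fun n => ∏ k ∈ Finset.range n, k !

lemma sfac_succ (n : ℕ) : sfac (n + 1) = sfac n * n ! :=
  Finset.prod_range_succ _ _

lemma sfac_ne_zero (n : ℕ) : (sfac n : ℚ) ≠ 0 := by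
  have : 0 < sfac n := Finset.prod_pos fun i _ => Nat.factorial_pos i
  exact_mod_cast this.ne'

lemma sfac_prod_shift (a m : ℕ) :
    sfac a * ∏ k ∈ Finset.range m, (a + k)! = sfac (a + m) := by
  induction m with
  | zero => simp
  | succ m ih =>
    rw [Finset.prod_range_succ, ← mul_assoc, ih, ← Nat.add_assoc, sfac_succ]

lemma sfac_prod_oddeven (m : ℕ) :
    ∏ k ∈ Finset.range m, ((2 * k + 1)! * (2 * k + 2)!) = sfac (2 * m + 1) := by
  induction m with
  | zero => simp [sfac]
  | succ m ih =>
    have e : sfac (2 * m + 3) = sfac (2 * m + 1) * ((2 * m + 1)! * (2 * m + 2)!) := by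
      have h1 : 2 * m + 3 = (2 * m + 2) + 1 := by omega
      have h2 : 2 * m + 2 = (2 * m + 1) + 1 := by omega
      rw [h1, sfac_succ, h2, sfac_succ, mul_assoc]
    rw [Finset.prod_range_succ, ih, show 2 * (m + 1) + 1 = 2 * m + 3 by ring, e]

lemma sfac_prod_succ (m : ℕ) :
    ∏ k ∈ Finset.range m, (k + 1)! = sfac (m + 1) := by
  rw [show sfac (m + 1) = ∏ k ∈ Finset.range (m + 1), k ! from rfl,
    Finset.prod_range_succ']
  simp

lemma sfac_prod_sub (m : ℕ) :
    ∏ k ∈ Finset.range m, (m - k)! = sfac (m + 1) := by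
  rw [← sfac_prod_succ m, ← Finset.prod_range_reflect (fun j => (j + 1)!) m]
  apply Finset.prod_congr rfl
  intro k hk
  simp only [Finset.mem_range] at hk
  congr 1
  omega

/-- Giambelli's degree formula for the Cayley–Menger variety `CM^{2,n}`:
`∏_{k=0}^{n-4} C(n-1+k, n-3-k) / C(2k+1, k) = (1/2) C(2n-4, n-2)`. -/
theorem giambelli_degree_dim_two (n : ℕ) (hn : 4 ≤ n) :
    (∏ k ∈ Finset.range (n - 3),
        ((n - 1 + k).choose (n - 3 - k) : ℚ) / ((2 * k + 1).choose k : ℚ)) =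
      (1 / 2 : ℚ) * ((2 * n - 4).choose (n - 2) : ℚ) := by
  obtain ⟨m, rfl⟩ : ∃ m, n = m + 4 := ⟨n - 4, by omega⟩
  have h3 : m + 4 - 3 = m + 1 := by omega
  have h2 : m + 4 - 2 = m + 2 := by omega
  have h4 : 2 * (m + 4) - 4 = 2 * m + 4 := by omega
  rw [h3, h2, h4]
  have hfne : ∀ x : ℕ, ((x ! : ℕ) : ℚ) ≠ 0 := fun x => by
    exact_mod_cast (Nat.factorial_pos x).ne'
  have hterm : ∀ k ∈ Finset.range (m + 1),
      ((m + 4 - 1 + k).choose (m + 1 - k) : ℚ) / ((2 * k + 1).choose k : ℚ)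
        = (((m + 3 + k)! * (k ! * (k + 1)!) : ℕ) : ℚ)
            / ((((m + 1 - k)! * ((2 * k + 1)! * (2 * k + 2)!) : ℕ)) : ℚ) := by
    intro k hk
    simp only [Finset.mem_range] at hk
    have e1 : m + 4 - 1 + k = m + 3 + k := by omega
    rw [e1, Nat.cast_choose ℚ (show m + 1 - k ≤ m + 3 + k by omega),
      Nat.cast_choose ℚ (show k ≤ 2 * k + 1 by omega)]
    have e3 : m + 3 + k - (m + 1 - k) = 2 * k + 2 := by omega
    have e4 : 2 * k + 1 - k = k + 1 := by omega
    rw [e3, e4]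
    push_cast
    field_simp
  rw [Finset.prod_congr rfl hterm, Finset.prod_div_distrib, ← Nat.cast_prod,
    ← Nat.cast_prod]
  have hnum : ∏ k ∈ Finset.range (m + 1), ((m + 3 + k)! * (k ! * (k + 1)!))
      = (∏ k ∈ Finset.range (m + 1), (m + 3 + k)!) * (sfac (m + 1) * sfac (m + 2)) := by
    rw [Finset.prod_mul_distrib, Finset.prod_mul_distrib, sfac_prod_succ]
    rfl
  have hden : ∏ k ∈ Finset.range (m + 1), ((m + 1 - k)! * ((2 * k + 1)! * (2 * k + 2)!))
      = sfac (m + 2) * sfac (2 * m + 3) := by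
    rw [Finset.prod_mul_distrib, sfac_prod_sub, sfac_prod_oddeven]
    congr 1 <;> omega
  rw [hnum, hden]
  have hA : ((∏ k ∈ Finset.range (m + 1), (m + 3 + k)! : ℕ) : ℚ)
      = (sfac (2 * m + 4) : ℚ) / (sfac (m + 3) : ℚ) := by
    rw [eq_div_iff (sfac_ne_zero _), ← Nat.cast_mul, mul_comm]
    norm_cast
    rw [sfac_prod_shift]
    congr 1 <;> omega
  push_cast at hA
  rw [Nat.cast_choose ℚ (show m + 2 ≤ 2 * m + 4 by omega),
    show 2 * m + 4 - (m + 2) = m + 2 by omega]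
  push_cast
  rw [hA]
  have e5 : (sfac (2 * m + 4) : ℚ) = sfac (2 * m + 3) * (2 * m + 3)! := by
    rw [show 2 * m + 4 = (2 * m + 3) + 1 by ring, sfac_succ]; push_cast; ring
  have e6 : (sfac (m + 3) : ℚ) = sfac (m + 2) * (m + 2)! := by
    rw [show m + 3 = (m + 2) + 1 by ring, sfac_succ]; push_cast; ring
  have e7 : (sfac (m + 2) : ℚ) = sfac (m + 1) * (m + 1)! := by
    rw [sfac_succ]; push_cast; ring
  have e8 : (((2 * m + 4)! : ℕ) : ℚ) = (2 * m + 4) * (2 * m + 3)! := by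
    rw [show 2 * m + 4 = (2 * m + 3) + 1 by ring, Nat.factorial_succ]; push_cast; ring
  have e9 : (((m + 2)! : ℕ) : ℚ) = (m + 2) * (m + 1)! := by
    rw [show m + 2 = (m + 1) + 1 by ring, Nat.factorial_succ]; push_cast; ring
  rw [e5, e6, e7, e8, e9]
  have n1 : ((sfac (2 * m + 3) : ℕ) : ℚ) ≠ 0 := sfac_ne_zero _
  have n2 : ((sfac (m + 1) : ℕ) : ℚ) ≠ 0 := sfac_ne_zero _
  have n3 := hfne (m + 1)
  have n4 := hfne (2 * m + 3)
  have n5 : (m : ℚ) + 2 ≠ 0 := by positivity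
  field_simp
  ring
end

section
/- For every integer n ≥ 5, the following identity of rational numbers holds: 2 · ∏_{k=0}^{n−5} C(n−1+k, n−4−k) / C(2k+1, k) = (2^{n−3}/(n−2)) · C(2n−6, n−3). -/
open scoped BigOperators
open Finset

private lemma prod_cast_asc (a : ℕ) : ∀ m : ℕ,
    (∏ k ∈ range m, ((a + 1 + k : ℕ) : ℚ)) * (Nat.factorial a : ℚ)
      = (Nat.factorial (a + m) : ℚ)
  | 0 => by simp
  | m + 1 => by
    rw [prod_range_succ, mul_right_comm, prod_cast_asc a m, ← add_assoc,
      Nat.factorial_succ]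
    push_cast
    ring

private lemma R_step (m : ℕ) :
    (∏ k ∈ range (m + 1),
        ((m + 1 + 3 + k).choose (m + 1 - k) : ℚ) / ((2 * k + 1).choose k : ℚ))
      = (∏ k ∈ range m,
          ((m + 3 + k).choose (m - k) : ℚ) / ((2 * k + 1).choose k : ℚ))
        * (4 * (2 * (m : ℚ) + 3) / ((m : ℚ) + 3)) := by
  rw [prod_range_succ]
  have hlast : ((m + 1 + 3 + m).choose (m + 1 - m) : ℚ) / ((2 * m + 1).choose m : ℚ)
      = (2 * (m : ℚ) + 4) / ((2 * m + 1).choose m : ℚ) := by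
    have h : m + 1 - m = 1 := by omega
    rw [h, Nat.choose_one_right]
    push_cast
    ring_nf
  rw [hlast]
  have hfac : ∀ k ∈ range m,
      ((m + 1 + 3 + k).choose (m + 1 - k) : ℚ) / ((2 * k + 1).choose k : ℚ)
        = (((m + 4 + k : ℕ) : ℚ) / ((m + 1 - k : ℕ) : ℚ))
          * (((m + 3 + k).choose (m - k) : ℚ) / ((2 * k + 1).choose k : ℚ)) := by
    intro k hk
    rw [mem_range] at hk
    have h1 : m + 1 - k = (m - k) + 1 := by omega
    have h2 : m + 1 + 3 + k = (m + 3 + k) + 1 := by omega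
    have hq : (((m + 3 + k) + 1 : ℕ) : ℚ) * ((m + 3 + k).choose (m - k) : ℚ)
        = (((m + 3 + k) + 1).choose ((m - k) + 1) : ℚ) * (((m - k) + 1 : ℕ) : ℚ) := by
      exact_mod_cast congrArg (Nat.cast : ℕ → ℚ) (Nat.add_one_mul_choose_eq (m + 3 + k) (m - k))
    have hb : (((m + 1 - k : ℕ)) : ℚ) ≠ 0 := by
      have h : 0 < m + 1 - k := by omega
      exact_mod_cast h.ne'
    have hD : ((2 * k + 1).choose k : ℚ) ≠ 0 := by
      exact_mod_cast (Nat.choose_pos (show k ≤ 2 * k + 1 by omega)).ne'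
    have hc : ((m + 4 + k : ℕ) : ℚ) = (((m + 3 + k) + 1 : ℕ) : ℚ) := by
      push_cast; ring
    rw [h2, div_mul_div_comm, div_eq_div_iff hD (mul_ne_zero hb hD), h1]
    rw [h1] at hb
    linear_combination (-((2 * k + 1).choose k : ℚ)) * hq
  rw [prod_congr rfl hfac, prod_mul_distrib, prod_div_distrib]
  have hB : (∏ k ∈ range m, ((m + 1 - k : ℕ) : ℚ)) = ((m + 1).factorial : ℚ) := by
    rw [← prod_range_reflect]
    have h : ∀ k ∈ range m, ((m + 1 - (m - 1 - k) : ℕ) : ℚ) = ((1 + 1 + k : ℕ) : ℚ) := by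
      intro k hk
      rw [mem_range] at hk
      congr 1
      omega
    rw [prod_congr rfl h]
    have h2 := prod_cast_asc 1 m
    simpa [Nat.factorial_one, add_comm 1 m] using h2
  have hfne : ∀ j : ℕ, ((j.factorial : ℚ)) ≠ 0 := fun j => by
    exact_mod_cast (Nat.factorial_pos j).ne'
  have hA : (∏ k ∈ range m, ((m + 4 + k : ℕ) : ℚ))
      = ((2 * m + 3).factorial : ℚ) / ((m + 3).factorial : ℚ) := by
    have h : ∀ k ∈ range m, ((m + 4 + k : ℕ) : ℚ) = ((m + 3 + 1 + k : ℕ) : ℚ) := by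
      intro k _
      push_cast
      ring
    rw [prod_congr rfl h, eq_div_iff (hfne (m + 3))]
    have h2 := prod_cast_asc (m + 3) m
    have h3 : m + 3 + m = 2 * m + 3 := by omega
    rwa [h3] at h2
  rw [hA, hB]
  have hch : ((2 * m + 1).choose m : ℚ)
      = ((2 * m + 1).factorial : ℚ) / ((m.factorial : ℚ) * ((m + 1).factorial : ℚ)) := by
    have h := Nat.choose_mul_factorial_mul_factorial (show m ≤ 2 * m + 1 by omega)
    have h2 : 2 * m + 1 - m = m + 1 := by omega
    rw [h2] at h
    rw [eq_div_iff (mul_ne_zero (hfne m) (hfne (m + 1))), ← mul_assoc]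
    exact_mod_cast congrArg (Nat.cast : ℕ → ℚ) h
  have e1 : ((2 * m + 3).factorial : ℚ)
      = (2 * (m : ℚ) + 3) * (2 * (m : ℚ) + 2) * ((2 * m + 1).factorial : ℚ) := by
    have h : 2 * m + 3 = (2 * m + 1) + 1 + 1 := by omega
    rw [h, Nat.factorial_succ, Nat.factorial_succ]
    push_cast
    ring
  have e2 : ((m + 3).factorial : ℚ)
      = ((m : ℚ) + 3) * ((m : ℚ) + 2) * ((m + 1).factorial : ℚ) := by
    have h : m + 3 = (m + 1) + 1 + 1 := by omega
    rw [h, Nat.factorial_succ, Nat.factorial_succ]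
    push_cast
    ring
  have e3 : ((m + 1).factorial : ℚ) = ((m : ℚ) + 1) * (m.factorial : ℚ) := by
    rw [Nat.factorial_succ]
    push_cast
    ring
  have key : ((2 * m + 3).factorial : ℚ) / ((m + 3).factorial : ℚ) / ((m + 1).factorial : ℚ)
      * ((2 * (m : ℚ) + 4) / ((2 * m + 1).choose m : ℚ))
      = 4 * (2 * (m : ℚ) + 3) / ((m : ℚ) + 3) := by
    rw [hch, e1, e2, e3]
    have h1 : ((m : ℚ) + 1) ≠ 0 := by positivity
    have h2 : ((m : ℚ) + 2) ≠ 0 := by positivity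
    have h3 : ((m : ℚ) + 3) ≠ 0 := by positivity
    field_simp
    ring
  linear_combination (∏ k ∈ range m,
      ((m + 3 + k).choose (m - k) : ℚ) / ((2 * k + 1).choose k : ℚ)) * key

private lemma choose_step (m : ℕ) :
    (((2 * m + 4).choose (m + 2) : ℚ)) * ((m : ℚ) + 2)
      = 2 * (2 * (m : ℚ) + 3) * ((2 * m + 2).choose (m + 1) : ℚ) := by
  have h1 : (2 * (m : ℚ) + 4) * ((2 * m + 3).choose (m + 1) : ℚ)
      = ((2 * m + 4).choose (m + 2) : ℚ) * ((m : ℚ) + 2) := by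
    have h := Nat.add_one_mul_choose_eq (2 * m + 3) (m + 1)
    have h' : (2 * m + 4) * (2 * m + 3).choose (m + 1)
        = (2 * m + 4).choose (m + 2) * (m + 2) := by
      simpa [Nat.succ_eq_add_one] using h
    exact_mod_cast congrArg (Nat.cast : ℕ → ℚ) h'
  have h2 : (2 * (m : ℚ) + 3) * ((2 * m + 2).choose m : ℚ)
      = ((2 * m + 3).choose (m + 1) : ℚ) * ((m : ℚ) + 1) := by
    have h := Nat.add_one_mul_choose_eq (2 * m + 2) m
    have h' : (2 * m + 3) * (2 * m + 2).choose m
        = (2 * m + 3).choose (m + 1) * (m + 1) := by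
      simpa [Nat.succ_eq_add_one] using h
    exact_mod_cast congrArg (Nat.cast : ℕ → ℚ) h'
  have h3 : ((2 * m + 2).choose (m + 1) : ℚ) * ((m : ℚ) + 1)
      = ((2 * m + 2).choose m : ℚ) * ((m : ℚ) + 2) := by
    have h := Nat.choose_succ_right_eq (2 * m + 2) m
    have h' : (2 * m + 2).choose (m + 1) * (m + 1) = (2 * m + 2).choose m * (m + 2) := by
      have : 2 * m + 2 - m = m + 2 := by omega
      rwa [this] at h
    exact_mod_cast congrArg (Nat.cast : ℕ → ℚ) h'
  have h1' : ((m : ℚ) + 1) ≠ 0 := by positivity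
  have h2' : ((m : ℚ) + 2) ≠ 0 := by positivity
  have key : (((2 * m + 4).choose (m + 2) : ℚ)) * ((m : ℚ) + 2) * (((m : ℚ) + 1) * ((m : ℚ) + 2))
      = 2 * (2 * (m : ℚ) + 3) * ((2 * m + 2).choose (m + 1) : ℚ)
        * (((m : ℚ) + 1) * ((m : ℚ) + 2)) := by
    linear_combination (-((m : ℚ) + 1) * ((m : ℚ) + 2)) * h1
      + (-(2 * (m : ℚ) + 4) * ((m : ℚ) + 2)) * h2
      + (-(2 * (m : ℚ) + 4) * (2 * (m : ℚ) + 3)) * h3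
  exact mul_right_cancel₀ (mul_ne_zero h1' h2') key

private lemma Q (m : ℕ) :
    (∏ k ∈ range m, ((m + 3 + k).choose (m - k) : ℚ) / ((2 * k + 1).choose k : ℚ))
      = (2 : ℚ) ^ m / ((m : ℚ) + 2) * ((2 * m + 2).choose (m + 1) : ℚ) := by
  induction m with
  | zero => norm_num
  | succ m ih =>
    rw [R_step m, ih]
    have h2' : ((m : ℚ) + 2) ≠ 0 := by positivity
    have h3' : ((m : ℚ) + 3) ≠ 0 := by positivity
    have hA' : ((2 * m + 4).choose (m + 2) : ℚ)
        = 2 * (2 * (m : ℚ) + 3) * ((2 * m + 2).choose (m + 1) : ℚ) / ((m : ℚ) + 2) := by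
      rw [eq_div_iff h2']
      linear_combination choose_step m
    have hcast1 : ((2 * (m + 1) + 2).choose (m + 1 + 1) : ℚ)
        = ((2 * m + 4).choose (m + 2) : ℚ) := by
      rw [show 2 * (m + 1) + 2 = 2 * m + 4 from by omega,
        show m + 1 + 1 = m + 2 from by omega]
    rw [hcast1, hA']
    push_cast
    field_simp
    ring

/-- Twice Giambelli's degree formula for the Cayley–Menger variety `CM^{3,n}`:
`2 ∏_{k=0}^{n-5} C(n-1+k, n-4-k) / C(2k+1, k) = (2^{n-3}/(n-2)) C(2n-6, n-3)`. -/
theorem giambelli_degree_dim_three (n : ℕ) (hn : 5 ≤ n) :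
    2 * (∏ k ∈ Finset.range (n - 4),
        ((n - 1 + k).choose (n - 4 - k) : ℚ) / ((2 * k + 1).choose k : ℚ)) =
      (2 : ℚ) ^ (n - 3) / ((n : ℚ) - 2) * ((2 * n - 6).choose (n - 3) : ℚ) := by
  obtain ⟨m, rfl⟩ : ∃ m, n = m + 4 := ⟨n - 4, by omega⟩
  have h1 : m + 4 - 4 = m := by omega
  have h2 : m + 4 - 1 = m + 3 := by omega
  have h3 : m + 4 - 3 = m + 1 := by omega
  have h4 : 2 * (m + 4) - 6 = 2 * m + 2 := by omega
  rw [h1, h2, h3, h4, Q m]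
  have hc : ((m : ℚ) + 4) - 2 = (m : ℚ) + 2 := by ring
  push_cast
  rw [show ((m:ℚ) + 4 - 2) = (m:ℚ) + 2 by ring, pow_succ]
  have h2' : ((m : ℚ) + 2) ≠ 0 := by positivity
  field_simp
end

section
/- Let K be a field of characteristic different from 2, let n ≥ 2, and let x : Fin n → Fin n → K satisfy x i j = x j i for all i, j and x i i = 0 for all i. Let X be the (n+1)×(n+1) matrix over K with X_{00} = 0, X_{0j} = X_{j0} = 1 for 1 ≤ j ≤ n, and X_{ij} = x_{ij} for 1 ≤ i, j ≤ n. Let Y be the (n−1)×(n−1) matrix with entries Y_{ij} = (1/2)(x_{1,i+1} + x_{1,j+1} − x_{i+1,j+1}) for 1 ≤ i, j ≤ n−1. Then rank(X) = 2 + rank(Y). -/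
open Matrix
section
variable {K : Type*} [Field K]

theorem CM_aux_finrank_prod {M N : Type*} [AddCommGroup M] [AddCommGroup N]
    [Module K M] [Module K N] [FiniteDimensional K M] [FiniteDimensional K N]
    (u : Submodule K M) (v : Submodule K N) :
    Module.finrank K (u.prod v) = Module.finrank K u + Module.finrank K v := by
  let φ : ↥(u.prod v) →ₗ[K] ↥u × ↥v := LinearMap.prod
    (((LinearMap.fst K M N).comp (u.prod v).subtype).codRestrict u (fun z => z.2.1))
    (((LinearMap.snd K M N).comp (u.prod v).subtype).codRestrict v (fun z => z.2.2))
  have hbij : Function.Bijective φ := by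
    constructor
    · rintro ⟨⟨a, b⟩, h⟩ ⟨⟨c, d⟩, h'⟩ he
      simp only [φ, Prod.ext_iff, LinearMap.prod_apply, Pi.prod, Subtype.ext_iff,
        LinearMap.codRestrict_apply, LinearMap.comp_apply] at he
      exact Subtype.ext (Prod.ext he.1 he.2)
    · rintro ⟨⟨a, ha⟩, ⟨b, hb⟩⟩
      exact ⟨⟨(a, b), ⟨ha, hb⟩⟩, rfl⟩
  rw [(LinearEquiv.ofBijective φ hbij).finrank_eq, Module.finrank_prod]

theorem CM_aux_rank_fromBlocks {p q : Type*} [Fintype p] [Fintype q]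
    [DecidableEq p] [DecidableEq q] (A : Matrix p p K) (D : Matrix q q K) :
    (Matrix.fromBlocks A 0 0 D).rank = A.rank + D.rank := by
  classical
  let f := LinearEquiv.sumArrowLequivProdArrow p q K K
  have hml : (Matrix.fromBlocks A 0 0 D).mulVecLin
      = f.symm.toLinearMap ∘ₗ (A.mulVecLin.prodMap D.mulVecLin) ∘ₗ f.toLinearMap := by
    apply LinearMap.ext; intro v
    have hv : v = Sum.elim (v ∘ Sum.inl) (v ∘ Sum.inr) := by ext (a | b) <;> rfl
    conv_lhs => rw [hv]
    simp only [Matrix.mulVecLin_apply, LinearMap.coe_comp, Function.comp_apply,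
      LinearEquiv.coe_coe, Matrix.fromBlocks_mulVec]
    ext (a | b) <;>
      simp [f, LinearEquiv.sumArrowLequivProdArrow, Equiv.sumArrowEquivProdArrow]
  have hr : LinearMap.range (A.mulVecLin.prodMap D.mulVecLin)
      = (LinearMap.range A.mulVecLin).prod (LinearMap.range D.mulVecLin) := by
    ext ⟨a, b⟩
    simp only [LinearMap.mem_range, Submodule.mem_prod, Prod.ext_iff]
    constructor
    · rintro ⟨⟨x, y⟩, h1, h2⟩; exact ⟨⟨x, h1⟩, ⟨y, h2⟩⟩
    · rintro ⟨⟨x, hx⟩, ⟨y, hy⟩⟩; exact ⟨(x, y), hx, hy⟩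
  rw [Matrix.rank, hml, LinearMap.range_comp, LinearMap.range_comp,
    LinearEquiv.range, Submodule.map_top, LinearEquiv.finrank_map_eq,
    hr, Matrix.rank, Matrix.rank]
  exact CM_aux_finrank_prod _ _

def Pmat (m : ℕ) (c : Fin (m + 3) → K) :
    Matrix (Fin (m + 3)) (Fin (m + 3)) K := fun i j =>
  if i = j then 1
  else if 2 ≤ (i : ℕ) ∧ (j : ℕ) = 1 then -1
  else if 2 ≤ (i : ℕ) ∧ (j : ℕ) = 0 then -(c i)
  else 0

theorem Pmat_row (m : ℕ) (c : Fin (m + 3) → K)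
    (i : Fin (m + 3)) (F : Fin (m + 3) → K) :
    (∑ k, Pmat m c i k * F k)
      = F i + (if 2 ≤ (i : ℕ) then -F 1 - c i * F 0 else 0) := by
  have v1 : ((1 : Fin (m + 3)) : ℕ) = 1 := rfl
  have v0 : ((0 : Fin (m + 3)) : ℕ) = 0 := rfl
  have ne1 : ∀ k : Fin (m + 3), (k : ℕ) ≠ 1 → (1 : Fin (m + 3)) ≠ k :=
    fun k hk h => hk (h ▸ v1)
  have ne0 : ∀ k : Fin (m + 3), (k : ℕ) ≠ 0 → (0 : Fin (m + 3)) ≠ k :=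
    fun k hk h => hk (h ▸ v0)
  have eq1 : ∀ k : Fin (m + 3), (k : ℕ) = 1 → (1 : Fin (m + 3)) = k :=
    fun k hk => Fin.ext (by rw [v1, hk])
  have eq0 : ∀ k : Fin (m + 3), (k : ℕ) = 0 → (0 : Fin (m + 3)) = k :=
    fun k hk => Fin.ext (by rw [v0, hk])
  by_cases hi : 2 ≤ (i : ℕ)
  · have hsplit : ∀ k : Fin (m + 3), Pmat m c i k * F k
        = (if i = k then F k else 0)
          + ((if (1 : Fin (m + 3)) = k then -F k else 0)
            + (if (0 : Fin (m + 3)) = k then -(c i) * F k else 0)) := by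
      intro k
      simp only [Pmat]
      by_cases h1 : i = k
      · subst h1
        rw [if_pos rfl, if_pos rfl, if_neg (ne1 i (by omega)),
          if_neg (ne0 i (by omega))]
        ring
      · rw [if_neg h1]
        by_cases h2 : (k : ℕ) = 1
        · rw [if_pos ⟨hi, h2⟩, if_neg h1, if_pos (eq1 k h2), if_neg (ne0 k (by omega))]
          ring
        · rw [if_neg (fun h => h2 h.2)]
          by_cases h3 : (k : ℕ) = 0
          · rw [if_pos ⟨hi, h3⟩, if_neg h1, if_neg (ne1 k (by omega)),
              if_pos (eq0 k h3)]
            ring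
          · rw [if_neg (fun h => h3 h.2), if_neg h1, if_neg (ne1 k h2),
              if_neg (ne0 k h3)]
            ring
    rw [Finset.sum_congr rfl fun k _ => hsplit k, Finset.sum_add_distrib,
      Finset.sum_add_distrib, Finset.sum_ite_eq, Finset.sum_ite_eq, Finset.sum_ite_eq]
    simp only [Finset.mem_univ, if_true, if_pos hi, if_pos trivial]
    ring
  · have hsplit : ∀ k : Fin (m + 3), Pmat m c i k * F k = if i = k then F k else 0 := by
      intro k
      simp only [Pmat]
      by_cases h1 : i = k
      · subst h1; rw [if_pos rfl, if_pos rfl]; ring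
      · rw [if_neg h1, if_neg (fun h => hi h.1), if_neg (fun h => hi h.1), if_neg h1]
        ring
    rw [Finset.sum_congr rfl fun k _ => hsplit k, Finset.sum_ite_eq]
    simp only [Finset.mem_univ, if_true, if_neg hi, if_pos trivial]
    ring

theorem Pmat_det_isUnit (m : ℕ) (c : Fin (m + 3) → K) :
    IsUnit (Pmat m c).det := by
  have htri : (Pmat m c)ᵀ.BlockTriangular id := by
    intro i j hij
    have hij' : (j : ℕ) < (i : ℕ) := hij
    simp only [Matrix.transpose_apply, Pmat]
    rw [if_neg (by rw [Fin.ext_iff]; omega), if_neg (by omega), if_neg (by omega)]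
  have hd : ∀ i, Pmat m c i i = 1 := fun i => if_pos rfl
  have : (Pmat m c).det = 1 := by
    rw [← Matrix.det_transpose, Matrix.det_of_upperTriangular htri]
    simp [hd]
  simp [this]

end

/-- Over a field of characteristic `≠ 2`, the bordered Cayley–Menger matrix `X` of a
symmetric zero-diagonal array `x` on `n = m + 2 ≥ 2` indices and the associated
"Gram" matrix `Y` (obtained via the cosine-theorem substitution
`y_{ij} = (x_{1i} + x_{1j} - x_{ij})/2`, taking the first point as origin)
satisfy `rank X = 2 + rank Y`. -/
theorem cayleyMenger_rank_eq_two_add_gram_rank {K : Type*} [Field K]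
    (h2 : (2 : K) ≠ 0) (m : ℕ)
    (x : Fin (m + 2) → Fin (m + 2) → K)
    (hsym : ∀ i j, x i j = x j i) (hdiag : ∀ i, x i i = 0)
    (X : Matrix (Fin (m + 3)) (Fin (m + 3)) K)
    (hX00 : X 0 0 = 0)
    (hX0 : ∀ j : Fin (m + 2), X 0 j.succ = 1)
    (hX0' : ∀ j : Fin (m + 2), X j.succ 0 = 1)
    (hXij : ∀ i j : Fin (m + 2), X i.succ j.succ = x i j)
    (Y : Matrix (Fin (m + 1)) (Fin (m + 1)) K)
    (hY : ∀ i j : Fin (m + 1), Y i j = (x 0 i.succ + x 0 j.succ - x i.succ j.succ) / 2) :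
    X.rank = 2 + Y.rank := by
  classical
  set c : Fin (m + 3) → K := fun i => x 0 ⟨(i : ℕ) - 1, by have := i.isLt; omega⟩ with hc_def
  set P : Matrix (Fin (m + 3)) (Fin (m + 3)) K := Pmat m c with hP_def
  set N : Matrix (Fin (m + 3)) (Fin (m + 3)) K := P * X * Pᵀ with hN_def
  -- index embeddings
  set jj : Fin (m + 1) → Fin (m + 3) := fun a => a.succ.succ with hjj_def
  have v1 : ((1 : Fin (m + 3)) : ℕ) = 1 := rfl
  have hjjv : ∀ a : Fin (m + 1), ((jj a : Fin (m + 3)) : ℕ) = (a : ℕ) + 2 := fun a => rfl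
  have h1succ : (1 : Fin (m + 3)) = (0 : Fin (m + 2)).succ := rfl
  -- entries of P * X
  have hPX : ∀ i k, (P * X) i k
      = X i k + (if 2 ≤ (i : ℕ) then -X 1 k - c i * X 0 k else 0) := by
    intro i k
    rw [Matrix.mul_apply]
    exact Pmat_row m c i (fun t => X t k)
  have hN : ∀ i j, N i j
      = (P * X) i j + (if 2 ≤ (j : ℕ) then -(P * X) i 1 - c j * (P * X) i 0 else 0) := by
    intro i j
    rw [hN_def, Matrix.mul_apply]
    simp only [Matrix.transpose_apply]
    rw [Finset.sum_congr rfl fun k _ => mul_comm ((P * X) i k) (P j k)]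
    exact Pmat_row m c j (fun t => (P * X) i t)
  -- X entry facts
  have hX11 : X 1 1 = 0 := by rw [h1succ, hXij]; exact hdiag 0
  have hX01 : X 0 1 = 1 := by rw [h1succ]; exact hX0 0
  have hX10 : X 1 0 = 1 := by rw [h1succ]; exact hX0' 0
  have hX0jj : ∀ a, X 0 (jj a) = 1 := fun a => hX0 a.succ
  have hXjj0 : ∀ a, X (jj a) 0 = 1 := fun a => hX0' a.succ
  have hX1jj : ∀ a, X 1 (jj a) = x 0 a.succ := fun a => by rw [h1succ]; exact hXij 0 a.succ
  have hXjj1 : ∀ a, X (jj a) 1 = x a.succ 0 := fun a => by rw [h1succ]; exact hXij a.succ 0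
  have hXjjjj : ∀ a b, X (jj a) (jj b) = x a.succ b.succ := fun a b => hXij a.succ b.succ
  have hcjj : ∀ a : Fin (m + 1), c (jj a) = x 0 a.succ := by
    intro a
    rw [hc_def]
    show x 0 _ = x 0 a.succ
    congr 1
  -- conditions
  have cond_jj : ∀ a : Fin (m + 1), 2 ≤ ((jj a : Fin (m + 3)) : ℕ) := by
    intro a; rw [hjjv]; omega
  have cond0 : ¬ (2 ≤ ((0 : Fin (m + 3)) : ℕ)) := by norm_num
  have cond1 : ¬ (2 ≤ ((1 : Fin (m + 3)) : ℕ)) := by rw [v1]; omega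
  -- entries of N
  have hPX0 : ∀ k, (P * X) 0 k = X 0 k := by
    intro k; rw [hPX, if_neg cond0, add_zero]
  have hPX1 : ∀ k, (P * X) 1 k = X 1 k := by
    intro k; rw [hPX, if_neg cond1, add_zero]
  have hPXjj : ∀ a k, (P * X) (jj a) k = X (jj a) k - X 1 k - x 0 a.succ * X 0 k := by
    intro a k; rw [hPX, if_pos (cond_jj a), hcjj]; ring
  have hN00 : N 0 0 = 0 := by
    rw [hN, if_neg cond0, add_zero, hPX0, hX00]
  have hN01 : N 0 1 = 1 := by
    rw [hN, if_neg cond1, add_zero, hPX0, hX01]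
  have hN10 : N 1 0 = 1 := by
    rw [hN, if_neg cond0, add_zero, hPX1, hX10]
  have hN11 : N 1 1 = 0 := by
    rw [hN, if_neg cond1, add_zero, hPX1, hX11]
  have hN0r : ∀ b, N 0 (jj b) = 0 := by
    intro b
    rw [hN, if_pos (cond_jj b), hcjj, hPX0, hPX0, hPX0, hX0jj, hX01, hX00]
    ring
  have hN1r : ∀ b, N 1 (jj b) = 0 := by
    intro b
    rw [hN, if_pos (cond_jj b), hcjj, hPX1, hPX1, hPX1, hX1jj, hX11, hX10]
    ring
  have hNr0 : ∀ a, N (jj a) 0 = 0 := by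
    intro a
    rw [hN, if_neg cond0, add_zero, hPXjj, hXjj0, hX10, hX00]
    ring
  have hNr1 : ∀ a, N (jj a) 1 = 0 := by
    intro a
    rw [hN, if_neg cond1, add_zero, hPXjj, hXjj1, hX11, hX01, hsym a.succ 0]
    ring
  have hNrr : ∀ a b, N (jj a) (jj b) = -2 * Y a b := by
    intro a b
    rw [hN, if_pos (cond_jj b), hcjj, hPXjj, hPXjj, hPXjj, hXjjjj, hX1jj, hXjj1,
      hXjj0, hX0jj, hX11, hX10, hX01, hX00, hY, hsym a.succ 0]
    field_simp
    ring
  -- the equivalence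
  set e : Fin 2 ⊕ Fin (m + 1) ≃ Fin (m + 3) :=
    finSumFinEquiv.trans (finCongr (by omega)) with he_def
  have he_l0 : e (Sum.inl 0) = (0 : Fin (m + 3)) := by
    apply Fin.ext; simp [he_def]
  have he_l1 : e (Sum.inl 1) = (1 : Fin (m + 3)) := by
    apply Fin.ext; simp [he_def, v1]
  have he_r : ∀ a : Fin (m + 1), e (Sum.inr a) = jj a := by
    intro a
    apply Fin.ext
    rw [hjjv]
    simp [he_def]
    try omega
  -- the block identity
  have hblock : N.submatrix e e
      = Matrix.fromBlocks !![0, 1; 1, (0 : K)] 0 0 ((-2 : K) • Y) := by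
    ext i j
    rw [Matrix.submatrix_apply]
    cases i with
    | inl a =>
      cases j with
      | inl b =>
        revert b
        rw [Fin.forall_fin_two]
        revert a
        rw [Fin.forall_fin_two]
        constructor
        · constructor
          · rw [he_l0, hN00]; simp
          · rw [he_l0, he_l1, hN01]; simp
        · constructor
          · rw [he_l0, he_l1, hN10]; simp
          · rw [he_l1, hN11]; simp
      | inr b =>
        revert a
        rw [Fin.forall_fin_two]
        constructor
        · rw [he_l0, he_r, hN0r]; simp
        · rw [he_l1, he_r, hN1r]; simp
    | inr a =>
      cases j with
      | inl b =>
        revert b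
        rw [Fin.forall_fin_two]
        constructor
        · rw [he_l0, he_r, hNr0]; simp
        · rw [he_l1, he_r, hNr1]; simp
      | inr b =>
        rw [he_r, he_r, hNrr]
        simp [Matrix.fromBlocks_apply₂₂]
  -- rank chain
  have hrk1 : N.rank = X.rank := by
    rw [hN_def, Matrix.rank_mul_eq_left_of_isUnit_det _ _
      (by rw [Matrix.det_transpose]; exact Pmat_det_isUnit m c),
      Matrix.rank_mul_eq_right_of_isUnit_det _ _ (Pmat_det_isUnit m c)]
  have hrk2 : (N.submatrix e e).rank = N.rank := Matrix.rank_submatrix N e e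
  have hrkA : (!![0, 1; 1, (0 : K)]).rank = 2 := by
    have h : IsUnit (!![0, 1; 1, (0 : K)]) := by
      apply (Matrix.isUnit_iff_isUnit_det _).mpr
      simp [Matrix.det_fin_two]
    simpa using Matrix.rank_of_isUnit _ h
  have hrkD : ((-2 : K) • Y).rank = Y.rank := by
    have h : (-2 : K) • Y = (Matrix.diagonal (fun _ : Fin (m + 1) => (-2 : K))) * Y := by
      ext i j; simp [Matrix.diagonal_mul]
    rw [h, Matrix.rank_mul_eq_right_of_isUnit_det]
    simp only [Matrix.det_diagonal, Finset.prod_const]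
    exact IsUnit.pow _ ((neg_ne_zero.mpr h2).isUnit)
  rw [← hrk1, ← hrk2, hblock, CM_aux_rank_fromBlocks, hrkA, hrkD]
end

section
/- Let d ≥ 1, n ≥ 1 and let p : Fin n → EuclideanSpace ℝ (Fin d) be any configuration of n points in ℝ^d. Let X be the (n+1)×(n+1) real matrix with X_{00} = 0, X_{0j} = X_{j0} = 1 for 1 ≤ j ≤ n, and X_{ij} = dist(p i, p j)² for 1 ≤ i, j ≤ n. Then rank(X) ≤ d + 2. -/
/-- Cayley's condition: the bordered Cayley–Menger matrix of the squared pairwise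
distances of `n` points in `ℝ^d` has rank at most `d + 2`. -/
theorem cayleyMenger_rank_le (d n : ℕ) (hd : 1 ≤ d) (hn : 1 ≤ n)
    (p : Fin n → EuclideanSpace ℝ (Fin d))
    (X : Matrix (Fin (n + 1)) (Fin (n + 1)) ℝ)
    (hX00 : X 0 0 = 0)
    (hX0 : ∀ j : Fin n, X 0 j.succ = 1)
    (hX0' : ∀ j : Fin n, X j.succ 0 = 1)
    (hXij : ∀ i j : Fin n, X i.succ j.succ = dist (p i) (p j) ^ 2) :
    X.rank ≤ d + 2 := by
  classical
  set A : Matrix (Fin (n + 1)) (Fin (d + 2)) ℝ :=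
    Matrix.of (Fin.cons (fun k => if k = 0 then (1:ℝ) else 0)
      (fun i => Fin.cons (‖p i‖ ^ 2) (Fin.cons 1 (fun k => p i k)))) with hA
  set B : Matrix (Fin (n + 1)) (Fin (d + 2)) ℝ :=
    Matrix.of (Fin.cons (fun k => if k = 1 then (1:ℝ) else 0)
      (fun j => Fin.cons 1 (Fin.cons (‖p j‖ ^ 2) (fun k => -2 * p j k)))) with hB
  have hfac : X = A * B.transpose := by
    ext i j
    rw [Matrix.mul_apply]
    induction i using Fin.cases with
    | zero =>
      induction j using Fin.cases with
      | zero =>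
        simp [hX00, hA, hB, Fin.sum_univ_succ, Matrix.transpose_apply]
      | succ j =>
        simp [hX0 j, hA, hB, Fin.sum_univ_succ, Matrix.transpose_apply]
    | succ i =>
      induction j using Fin.cases with
      | zero =>
        simp [hX0' i, hA, hB, Fin.sum_univ_succ, Matrix.transpose_apply]
      | succ j =>
        have hdist : dist (p i) (p j) ^ 2 = ∑ k, (p i k - p j k) ^ 2 := by
          rw [EuclideanSpace.dist_eq, Real.sq_sqrt]
          · simp [Real.dist_eq, sq_abs]
          · positivity
        have hni : ‖p i‖ ^ 2 = ∑ k, p i k ^ 2 := by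
          rw [EuclideanSpace.norm_eq, Real.sq_sqrt]
          · simp [Real.norm_eq_abs, sq_abs]
          · positivity
        have hnj : ‖p j‖ ^ 2 = ∑ k, p j k ^ 2 := by
          rw [EuclideanSpace.norm_eq, Real.sq_sqrt]
          · simp [Real.norm_eq_abs, sq_abs]
          · positivity
        simp only [hXij i j, hA, hB, Matrix.transpose_apply, Matrix.of_apply,
          Fin.cons_succ, Fin.sum_univ_succ, Fin.cons_zero]
        rw [hdist, hni, hnj]
        have hsplit : ∑ k, (p i k - p j k) ^ 2
            = (∑ k, p i k ^ 2) + ((∑ k, p j k ^ 2) + ∑ k, p i k * (-2 * p j k)) := by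
          rw [← Finset.sum_add_distrib, ← Finset.sum_add_distrib]
          apply Finset.sum_congr rfl
          intros k _
          ring
        rw [hsplit]
        ring
  rw [hfac]
  calc (A * B.transpose).rank ≤ B.transpose.rank := Matrix.rank_mul_le_right A B.transpose
    _ ≤ Fintype.card (Fin (d + 2)) := Matrix.rank_le_card_height B.transpose
    _ = d + 2 := Fintype.card_fin _
end

section
/- Fix d ≥ 1 and let G be any graph on n ≥ d + 1 vertices obtained from the complete graph K_{d+1} by a sequence of steps, each of which adds one new vertex together with d new edges joining it to d distinct existing vertices. Then G has exactly dn − (d+1 choose 2) edges and admits an infinitesimally rigid realization in ℝ^d; that is, there exists p : V → ℝ^d whose rigidity matrix has rank dn − (d+1 choose 2). Hence G is d-minimally rigid. -/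
open Classical in
/-- The rigidity matrix of a realization `p` of `G` in `ℝ^d`. Rows are indexed by
(ordered) pairs of vertices, with the row of a non-adjacent pair equal to zero;
the row of an edge `uv` carries `p u - p v` in the `d` columns of `u` and
`p v - p u` in the `d` columns of `v`. (Listing each edge in both orientations
does not change the row space, hence the rank.) -/
noncomputable def rigidityMatrix {V : Type*} (d : ℕ) (G : SimpleGraph V)
    (p : V → EuclideanSpace ℝ (Fin d)) : Matrix (V × V) (V × Fin d) ℝ :=
  fun e c =>
    if G.Adj e.1 e.2 then
      if c.1 = e.1 then p e.1 c.2 - p e.2 c.2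
      else if c.1 = e.2 then p e.2 c.2 - p e.1 c.2
      else 0
    else 0

/-- The graph on `Fin n` obtained from the complete graph on the first `d + 1` vertices
by successively joining each vertex `i ≥ d + 1` to the `d` distinct earlier vertices in
`a i`. -/
def hennebergDimGraph (d n : ℕ) (a : Fin n → Finset (Fin n)) : SimpleGraph (Fin n) :=
  SimpleGraph.fromRel (fun u v =>
    (u.val < d + 1 ∧ v.val < d + 1) ∨ (d + 1 ≤ v.val ∧ u ∈ a v))

/-!
Place vertex `i` at the point `(i, i², …, i^d)` of the moment curve. Filing each edge `uv`,
`u < v`, under its upper endpoint `v` makes the rigidity matrix block triangular: in the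
columns of `v`, the rows of the edges down from `v` are the vectors `p v - p u` for at most `d`
lower neighbours `u`, and these are linearly independent because any `d + 1` points of the
moment curve are affinely independent (Vandermonde). Hence the edge rows are linearly
independent and the rank is the number of edges, which is `(d+1 choose 2) + d (n - d - 1)`.
-/

open Finset

lemma eq_zero_of_forall_sum_mul_pow_eq_zero {ι R : Type*} [Fintype ι] [CommRing R] [IsDomain R]
    {x c : ι → R} (hx : Function.Injective x) {m : ℕ} (hm : Fintype.card ι ≤ m)
    (h : ∀ k < m, ∑ i, c i * x i ^ k = 0) : c = 0 := by
  let e := Fintype.equivFin ι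
  have hc : c ∘ e.symm = 0 :=
    Matrix.eq_zero_of_forall_pow_sum_mul_pow_eq_zero (hx.comp e.symm.injective) fun k => by
      simpa [Function.comp_def, e.symm.sum_comp (fun i => c i * x i ^ (k : ℕ))] using
        h k (by omega)
  funext i
  simpa using congrFun hc (e i)

noncomputable def momentCurve (d : ℕ) (t : ℝ) : EuclideanSpace ℝ (Fin d) :=
  WithLp.toLp 2 fun k => t ^ (k.val + 1)

/-- Any `d + 1` distinct points of the moment curve are affinely independent. -/
lemma linearIndependent_momentCurve_sub {ι : Type*} [Fintype ι] {d : ℕ} {t : ι → ℝ}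
    (ht : Function.Injective t) {s : ℝ} (hs : ∀ i, t i ≠ s) (hcard : Fintype.card ι ≤ d) :
    LinearIndependent ℝ fun i => momentCurve d s - momentCurve d (t i) := by
  rw [Fintype.linearIndependent_iff]
  intro g hg
  -- the relation says that the weights `∑ g` at `s` and `-g i` at `t i` kill all moments `≤ d`
  let x : Option ι → ℝ := fun o => o.elim s t
  let c : Option ι → ℝ := fun o => o.elim (∑ i, g i) (fun i => -g i)
  have hx : Function.Injective x := by
    rintro (_ | i) (_ | j) hij
    exacts [rfl, absurd hij.symm (hs j), absurd hij (hs i), congrArg some (ht hij)]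
  have hmoments : ∀ k < d + 1, ∑ o, c o * x o ^ k = 0 := by
    rintro (_ | k) hk
    · simp [c, Fintype.sum_option]
    · have := congrArg (fun v : EuclideanSpace ℝ (Fin d) => v ⟨k, by omega⟩) hg
      simp only [WithLp.ofLp_sum, WithLp.ofLp_smul, WithLp.ofLp_sub, momentCurve] at this
      simpa [c, x, Fintype.sum_option, Finset.sum_mul, ← sub_eq_add_neg, mul_sub] using this
  intro i
  simpa [c] using congrFun (eq_zero_of_forall_sum_mul_pow_eq_zero hx
    (by simpa using hcard) hmoments) (some i)

namespace SimpleGraph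

variable {V : Type*} [Fintype V] [LinearOrder V] (G : SimpleGraph V) [DecidableRel G.Adj]

def lowerNeighborFinset (v : V) : Finset V := {u | u < v ∧ G.Adj u v}

@[simp]
lemma mem_lowerNeighborFinset {u v : V} :
    u ∈ G.lowerNeighborFinset v ↔ u < v ∧ G.Adj u v := by
  simp [lowerNeighborFinset]

lemma ncard_edgeSet_eq_sum_card_lowerNeighborFinset :
    G.edgeSet.ncard = ∑ v, #(G.lowerNeighborFinset v) := by
  rw [← coe_edgeFinset, Set.ncard_coe_finset, ← card_sigma]
  refine (card_nbij' (fun e => s(e.2, e.1)) (fun e => ⟨e.sup, e.inf⟩) ?_ ?_ ?_ ?_).symm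
  · rintro ⟨v, u⟩
    simp +contextual
  · intro e he
    induction e with | _ u v => ?_
    simp only [coe_edgeFinset, mem_edgeSet] at he
    rcases lt_or_gt_of_ne he.ne with h | h <;> simp [h, h.le, he, he.symm]
  · rintro ⟨v, u⟩ h
    simp only [coe_sigma, Set.mem_sigma_iff, SetLike.mem_coe, mem_univ, true_and,
      mem_lowerNeighborFinset] at h
    simp [h.1.le]
  · intro e he
    induction e with | _ u v => ?_
    rcases le_total u v with h | h <;> simp [h, Sym2.eq_swap]

end SimpleGraph

section RigidityMatrix

variable {V : Type*} {d : ℕ} (G : SimpleGraph V) (p : V → EuclideanSpace ℝ (Fin d))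

lemma rigidityMatrix_of_not_adj {u v : V} (h : ¬ G.Adj u v) :
    rigidityMatrix d G p (u, v) = 0 := by
  ext c
  simp [rigidityMatrix, h]

lemma rigidityMatrix_swap (u v : V) :
    rigidityMatrix d G p (v, u) = rigidityMatrix d G p (u, v) := by
  by_cases h : G.Adj u v
  · ext ⟨w, k⟩
    by_cases hu : w = u <;> by_cases hv : w = v <;>
      simp [rigidityMatrix, h, h.symm, hu, hv, h.ne, h.ne']
  · rw [rigidityMatrix_of_not_adj G p h, rigidityMatrix_of_not_adj G p (mt G.adj_symm h)]

lemma rigidityMatrix_apply_snd {u v : V} (h : G.Adj u v) (k : Fin d) :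
    rigidityMatrix d G p (u, v) (v, k) = p v k - p u k := by
  simp [rigidityMatrix, h, h.ne']

lemma rigidityMatrix_apply_of_ne {u v w : V} (hu : w ≠ u) (hv : w ≠ v) (k : Fin d) :
    rigidityMatrix d G p (u, v) (w, k) = 0 := by
  simp [rigidityMatrix, hu, hv]

variable [Fintype V] [LinearOrder V] [DecidableRel G.Adj]

lemma span_range_rigidityMatrix :
    Submodule.span ℝ (Set.range (rigidityMatrix d G p)) =
      Submodule.span ℝ (Set.range fun e : Σ v, G.lowerNeighborFinset v =>
        rigidityMatrix d G p (e.2, e.1)) := by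
  refine le_antisymm (Submodule.span_le.2 ?_) (Submodule.span_mono ?_)
  · rintro _ ⟨⟨u, v⟩, rfl⟩
    by_cases h : G.Adj u v
    · rcases lt_or_gt_of_ne h.ne with huv | hvu
      · exact Submodule.subset_span ⟨⟨v, u, by simp [huv, h]⟩, rfl⟩
      · exact Submodule.subset_span
          ⟨⟨u, v, by simp [hvu, h.symm]⟩, rigidityMatrix_swap G p u v⟩
    · simp [rigidityMatrix_of_not_adj G p h]
  · rintro _ ⟨e, rfl⟩
    exact ⟨_, rfl⟩

lemma linearIndependent_rigidityMatrix_lowerRows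
    (hp : ∀ v, LinearIndependent ℝ fun u : G.lowerNeighborFinset v => p v - p u) :
    LinearIndependent ℝ fun e : Σ v, G.lowerNeighborFinset v =>
      rigidityMatrix d G p (e.2, e.1) := by
  rw [Fintype.linearIndependent_iff]
  intro g hg
  suffices ∀ v u, g ⟨v, u⟩ = 0 from fun e => this e.1 e.2
  intro v
  induction v using WellFoundedGT.induction with | _ v ih => ?_
  -- In the columns of `v` only the edges at `v` are nonzero, and those going up from `v`
  -- have zero weight by induction; what remains is a relation among the `p v - p u`.
  have hblock : ∑ u : G.lowerNeighborFinset v, g ⟨v, u⟩ • (p v - p u) = 0 := by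
    ext k
    have hvk := congrFun hg (v, k)
    rw [Finset.sum_apply, Fintype.sum_sigma, Finset.sum_eq_single v] at hvk
    · simpa [rigidityMatrix_apply_snd G p ((G.mem_lowerNeighborFinset).1 _).2] using hvk
    · intro w _ hwv
      refine Finset.sum_eq_zero fun u _ => ?_
      by_cases huv : (u : V) = v
      · have hvw : v < w := huv ▸ (G.mem_lowerNeighborFinset.1 u.2).1
        simp [ih w hvw u]
      · simp [rigidityMatrix_apply_of_ne G p (Ne.symm huv) (Ne.symm hwv)]
    · simp
  exact Fintype.linearIndependent_iff.1 (hp v) _ hblock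

theorem rank_rigidityMatrix_eq_ncard_edgeSet
    (hp : ∀ v, LinearIndependent ℝ fun u : G.lowerNeighborFinset v => p v - p u) :
    (rigidityMatrix d G p).rank = G.edgeSet.ncard := by
  rw [Matrix.rank_eq_finrank_span_row, Matrix.row, span_range_rigidityMatrix,
    finrank_span_eq_card (linearIndependent_rigidityMatrix_lowerRows G p hp),
    G.ncard_edgeSet_eq_sum_card_lowerNeighborFinset, Fintype.card_sigma]
  simp only [Fintype.card_coe]

end RigidityMatrix

lemma sum_fin_min_val_eq {d n : ℕ} (hn : d + 1 ≤ n) :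
    ∑ v : Fin n, min v.val d = d * n - (d + 1).choose 2 := by
  obtain ⟨m, rfl⟩ := Nat.exists_eq_add_of_le hn
  have hchoose : (d + 1).choose 2 = ∑ k ∈ range (d + 1), k := by
    rw [Finset.sum_range_id, Nat.choose_two_right]
  have htotal : d * (d + 1 + m) = (d + 1).choose 2 * 2 + m * d := by
    rw [hchoose, Finset.sum_range_id_mul_two, Nat.add_sub_cancel]
    ring
  rw [Fin.sum_univ_eq_sum_range (fun k => min k d), ← Finset.sum_range_add_sum_Ico _ hn,
    Finset.sum_congr rfl fun k hk => min_eq_left (Nat.lt_succ_iff.1 (mem_range.1 hk)),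
    Finset.sum_congr rfl fun k hk => min_eq_right (by simp at hk; omega), sum_const,
    Nat.card_Ico, ← hchoose, smul_eq_mul, htotal, Nat.add_sub_cancel_left]
  omega

section HennebergDimGraph

variable {d n : ℕ} {a : Fin n → Finset (Fin n)} [DecidableRel (hennebergDimGraph d n a).Adj]

lemma lowerNeighborFinset_hennebergDimGraph_of_lt {v : Fin n} (hv : v.val < d + 1) :
    (hennebergDimGraph d n a).lowerNeighborFinset v = Iio v := by
  ext u
  rw [SimpleGraph.mem_lowerNeighborFinset, mem_Iio]
  simp only [hennebergDimGraph, SimpleGraph.fromRel_adj, ← Fin.val_fin_lt]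
  omega

lemma lowerNeighborFinset_hennebergDimGraph_of_le
    (ha : ∀ i : Fin n, d + 1 ≤ i.val → ∀ j ∈ a i, j.val < i.val) {v : Fin n}
    (hv : d + 1 ≤ v.val) :
    (hennebergDimGraph d n a).lowerNeighborFinset v = a v := by
  ext u
  rw [SimpleGraph.mem_lowerNeighborFinset]
  simp only [hennebergDimGraph, SimpleGraph.fromRel_adj, ← Fin.val_fin_lt]
  constructor
  · rintro ⟨huv, -, (⟨-, h⟩ | ⟨-, h⟩) | ⟨h, -⟩ | ⟨hu, hvu⟩⟩
    · omega
    · exact h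
    · omega
    · exact absurd (ha u (by omega) v hvu) (by omega)
  · intro hu
    have huv := ha v hv u hu
    exact ⟨huv, by rintro rfl; omega, Or.inl (Or.inr ⟨hv, hu⟩)⟩

lemma card_lowerNeighborFinset_hennebergDimGraph
    (ha : ∀ i : Fin n, d + 1 ≤ i.val → (a i).card = d ∧ ∀ j ∈ a i, j.val < i.val)
    (v : Fin n) : #((hennebergDimGraph d n a).lowerNeighborFinset v) = min v.val d := by
  by_cases hv : v.val < d + 1
  · rw [lowerNeighborFinset_hennebergDimGraph_of_lt hv, Fin.card_Iio, min_eq_left (by omega)]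
  · rw [lowerNeighborFinset_hennebergDimGraph_of_le (fun i hi => (ha i hi).2) (by omega),
      (ha v (by omega)).1, min_eq_right (by omega)]

end HennebergDimGraph

theorem hennebergDim_minimally_rigid_general (d : ℕ) (n : ℕ) (hn : d + 1 ≤ n)
    (a : Fin n → Finset (Fin n))
    (ha : ∀ i : Fin n, d + 1 ≤ i.val → (a i).card = d ∧ ∀ j ∈ a i, j.val < i.val) :
    (hennebergDimGraph d n a).edgeSet.ncard = d * n - (d + 1).choose 2 ∧
    ∃ p : Fin n → EuclideanSpace ℝ (Fin d),
      (rigidityMatrix d (hennebergDimGraph d n a) p).rank =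
        d * n - (d + 1).choose 2 := by
  classical
  let G := hennebergDimGraph d n a
  have hedges : G.edgeSet.ncard = d * n - (d + 1).choose 2 := by
    rw [G.ncard_edgeSet_eq_sum_card_lowerNeighborFinset,
      sum_congr rfl fun v _ => card_lowerNeighborFinset_hennebergDimGraph ha v,
      sum_fin_min_val_eq hn]
  refine ⟨hedges, fun i => momentCurve d (i : ℕ), ?_⟩
  rw [rank_rigidityMatrix_eq_ncard_edgeSet, hedges]
  intro v
  refine linearIndependent_momentCurve_sub
    (t := fun u : G.lowerNeighborFinset v => ((u : ℕ) : ℝ))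
    (fun u w h => Subtype.ext (Fin.ext (Nat.cast_injective h))) (fun u => ?_) ?_
  · exact_mod_cast (Fin.val_fin_lt.2 (G.mem_lowerNeighborFinset.1 u.2).1).ne
  · rw [Fintype.card_coe, card_lowerNeighborFinset_hennebergDimGraph ha]
    exact min_le_right _ _

/-- Any graph obtained from `K_{d+1}` by repeatedly adding a new vertex joined to `d`
distinct existing vertices has exactly `dn - (d+1 choose 2)` edges and admits an
infinitesimally rigid realization in `ℝ^d`; hence it is `d`-minimally rigid. -/
theorem hennebergDim_minimally_rigid (d : ℕ) (hd : 1 ≤ d) (n : ℕ) (hn : d + 1 ≤ n)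
    (a : Fin n → Finset (Fin n))
    (ha : ∀ i : Fin n, d + 1 ≤ i.val → (a i).card = d ∧ ∀ j ∈ a i, j.val < i.val) :
    (hennebergDimGraph d n a).edgeSet.ncard = d * n - (d + 1).choose 2 ∧
    ∃ p : Fin n → EuclideanSpace ℝ (Fin d),
      (rigidityMatrix d (hennebergDimGraph d n a) p).rank =
        d * n - (d + 1).choose 2 :=
  hennebergDim_minimally_rigid_general d n hn a ha
end

section
/- For every fixed integer d ≥ 1 there exists a constant C > 0 such that for all integers n ≥ d + 2, the quantity D^{d,n} = ∏_{k=0}^{n−d−2} C(n−1+k, n−d−1−k) / C(2k+1, k) satisfies D^{d,n} ≤ C · 2^{dn}. -/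
open scoped BigOperators

/-- `D^{d,n}`, the degree of the Cayley–Menger variety `CM^{d,n}(ℂ)`, given by
Giambelli's formula `∏_{k=0}^{n-d-2} C(n-1+k, n-d-1-k) / C(2k+1, k)`. -/
def cayleyMengerDegree (d n : ℕ) : ℚ :=
  ∏ k ∈ Finset.range (n - d - 1),
    ((n - 1 + k).choose (n - d - 1 - k) : ℚ) / ((2 * k + 1).choose k : ℚ)

open Finset in
/-- Reparametrization `P d m = D^{d, m+d+1}` avoiding truncated subtraction in indices. -/
noncomputable def P (d m : ℕ) : ℚ :=
  ∏ k ∈ Finset.range m,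
    ((m + d + k).choose (m - k) : ℚ) / ((2 * k + 1).choose k : ℚ)

open Finset

lemma prod_shift (a : ℕ) : ∀ m : ℕ, (∏ k ∈ range m, (a + 1 + k)) * a.factorial = (a + m).factorial := by
  intro m
  induction m with
  | zero => simp
  | succ m ih =>
    rw [prod_range_succ, mul_right_comm, ih]
    rw [show a + (m+1) = (a+m)+1 by ring, Nat.factorial_succ]
    ring

lemma prod_add_two (m : ℕ) : (∏ j ∈ range m, (j + 2)) = (m+1).factorial := by
  induction m with
  | zero => simp
  | succ m ih =>
    rw [prod_range_succ, ih, Nat.factorial_succ (m+1)]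
    ring

lemma prod_rev (m : ℕ) : (∏ k ∈ range m, (m + 1 - k)) = (m+1).factorial := by
  rw [← Finset.prod_range_reflect]
  have h : ∀ j ∈ range m, m + 1 - (m - 1 - j) = j + 2 := by
    intro j hj; simp only [mem_range] at hj; omega
  rw [Finset.prod_congr rfl h, prod_add_two]

lemma P_succ (d m : ℕ) :
    P d (m+1) = P d m * ((2*m+d+1).choose (m+1) : ℚ) / ((2*m+1).choose m : ℚ) := by
  have hcast : ∀ k ∈ range m, ((m+1+d+k).choose (m+1-k) : ℚ) / ((2*k+1).choose k : ℚ)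
      = (((m+d+k).choose (m-k) : ℚ) / ((2*k+1).choose k : ℚ))
        * (((m+d+1+k : ℕ) : ℚ) / ((m+1-k : ℕ) : ℚ)) := by
    intro k hk
    simp only [mem_range] at hk
    have h1 : m+1+d+k = (m+d+k)+1 := by omega
    have h2 : m+1-k = (m-k)+1 := by omega
    have h3 : m+d+1+k = (m+d+k)+1 := by omega
    have hq : (((m+d+k)+1 : ℕ) : ℚ) * ((m+d+k).choose (m-k) : ℚ)
        = (((m+d+k)+1).choose ((m-k)+1) : ℚ) * (((m-k)+1 : ℕ) : ℚ) := by
      exact_mod_cast Nat.add_one_mul_choose_eq (m+d+k) (m-k)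
    have hne : (((m-k)+1 : ℕ) : ℚ) ≠ 0 := by positivity
    have hne2 : (((2*k+1).choose k : ℕ) : ℚ) ≠ 0 := by
      exact_mod_cast (Nat.choose_pos (by omega)).ne'
    rw [h1, h2, h3]
    push_cast at hq ⊢
    field_simp
    linear_combination -hq
  unfold P
  rw [prod_range_succ, Finset.prod_congr rfl hcast, prod_mul_distrib]
  rw [prod_div_distrib, prod_div_distrib]
  have f2 : ((m+d).factorial : ℚ) ≠ 0 := by exact_mod_cast (Nat.factorial_pos _).ne'
  have e1 : (∏ k ∈ range m, ((m+d+1+k : ℕ) : ℚ))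
      = ((2*m+d).factorial : ℚ) / ((m+d).factorial : ℚ) := by
    rw [eq_div_iff f2, ← Nat.cast_prod, ← Nat.cast_mul, prod_shift,
      show m+d+m = 2*m+d by ring]
  have e2 : (∏ k ∈ range m, ((m+1-k : ℕ) : ℚ)) = ((m+1).factorial : ℚ) := by
    rw [← Nat.cast_prod, prod_rev]
  have e3 : ((m+1+d+m).choose (m+1-m) : ℚ) = ((2*m+d+1 : ℕ) : ℚ) := by
    rw [show m+1-m = 1 by omega, Nat.choose_one_right, show m+1+d+m = 2*m+d+1 by ring]
  have e4 : ((2*m+d+1).choose (m+1) : ℚ)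
      = ((2*m+d+1).factorial : ℚ) / (((m+1).factorial : ℚ) * ((m+d).factorial : ℚ)) := by
    rw [Nat.cast_choose ℚ (by omega : m+1 ≤ 2*m+d+1), show 2*m+d+1-(m+1) = m+d by omega]
  have e5 : ((2*m+d+1).factorial : ℚ) = ((2*m+d+1 : ℕ) : ℚ) * ((2*m+d).factorial : ℚ) := by
    exact_mod_cast congrArg (Nat.cast (R := ℚ)) (Nat.factorial_succ (2*m+d))
  rw [e1, e2, e3, e4, e5]
  have f1 : ((m+1).factorial : ℚ) ≠ 0 := by exact_mod_cast (Nat.factorial_pos _).ne'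
  have f3 : (((2*m+1).choose m : ℕ) : ℚ) ≠ 0 := by
    exact_mod_cast (Nat.choose_pos (by omega)).ne'
  field_simp

lemma choose_ratio (m : ℕ) : ∀ j : ℕ, (2*m+1+j).choose (m+1) ≤ 2^j * (2*m+1).choose m := by
  have hsymm : (2*m+1).choose (m+1) = (2*m+1).choose m := by
    have h := Nat.choose_symm (show m+1 ≤ 2*m+1 by omega)
    rw [show 2*m+1-(m+1) = m by omega] at h
    exact h.symm
  intro j
  induction j with
  | zero => simpa using le_of_eq hsymm
  | succ j ih =>
    have mono : (2*m+1+j).choose m ≤ (2*m+1+j).choose (m+1) := by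
      cases j with
      | zero => simpa using hsymm.symm.le
      | succ j =>
        exact Nat.choose_le_succ_of_lt_half_left (by omega : m < (2*m+1+(j+1))/2)
    have pascal : (2*m+1+(j+1)).choose (m+1) = (2*m+1+j).choose m + (2*m+1+j).choose (m+1) := by
      rw [show 2*m+1+(j+1) = (2*m+1+j)+1 by ring]
      exact Nat.choose_succ_succ _ _
    calc (2*m+1+(j+1)).choose (m+1)
        = (2*m+1+j).choose m + (2*m+1+j).choose (m+1) := pascal
      _ ≤ 2 * ((2*m+1+j).choose (m+1)) := by omega
      _ ≤ 2 * (2^j * (2*m+1).choose m) := by omega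
      _ = 2^(j+1) * (2*m+1).choose m := by ring

lemma P_nonneg (d m : ℕ) : 0 ≤ P d m := by
  unfold P
  apply Finset.prod_nonneg
  intro k _
  positivity

lemma P_bound (d : ℕ) : ∀ m : ℕ, 1 ≤ m → P d m ≤ (d+1 : ℚ) * 2^(d*m) := by
  intro m hm
  induction m, hm using Nat.le_induction with
  | base =>
    have : P d 1 = (d+1 : ℚ) := by
      unfold P
      simp [Nat.choose_one_right]
      ring
    rw [this]
    nth_rewrite 1 [show (d+1:ℚ) = (d+1:ℚ)*1 by ring]
    apply mul_le_mul_of_nonneg_left _ (by positivity)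
    simpa using pow_le_pow_right₀ (by norm_num : (1:ℚ) ≤ 2) (Nat.zero_le (d*1))
  | succ m hm ih =>
    have hratio : ((2*m+d+1).choose (m+1) : ℚ) / ((2*m+1).choose m : ℚ) ≤ 2^d := by
      rw [div_le_iff₀ (by exact_mod_cast Nat.choose_pos (by omega : m ≤ 2*m+1))]
      have h := choose_ratio m d
      rw [show 2*m+1+d = 2*m+d+1 by ring] at h
      calc ((2*m+d+1).choose (m+1) : ℚ) ≤ ((2^d * (2*m+1).choose m : ℕ) : ℚ) := by
            exact_mod_cast h
        _ = 2^d * ((2*m+1).choose m : ℚ) := by push_cast; ring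
    have hr0 : (0:ℚ) ≤ ((2*m+d+1).choose (m+1) : ℚ) / ((2*m+1).choose m : ℚ) := by positivity
    rw [P_succ, mul_div_assoc]
    calc P d m * (((2*m+d+1).choose (m+1) : ℚ) / ((2*m+1).choose m : ℚ))
        ≤ ((d+1 : ℚ) * 2^(d*m)) * 2^d :=
          mul_le_mul ih hratio hr0 (by positivity)
      _ = (d+1 : ℚ) * 2^(d*(m+1)) := by rw [mul_assoc, ← pow_add, Nat.mul_succ]

lemma cmd_eq_P (d n : ℕ) (hn : d + 2 ≤ n) : cayleyMengerDegree d n = P d (n - d - 1) := by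
  unfold cayleyMengerDegree P
  apply Finset.prod_congr rfl
  intro k hk
  simp only [Finset.mem_range] at hk
  rw [show n - 1 + k = n - d - 1 + d + k by omega, show n - d - 1 - k = n - d - 1 - k from rfl]

/-- For fixed `d`, the degree `D^{d,n}` of the Cayley–Menger variety grows like `O(2^{dn})`. -/
theorem cayleyMengerDegree_growth (d : ℕ) (hd : 1 ≤ d) :
    ∃ C : ℚ, 0 < C ∧ ∀ n : ℕ, d + 2 ≤ n →
      cayleyMengerDegree d n ≤ C * 2 ^ (d * n) := by
  refine ⟨(d+1 : ℚ), by positivity, fun n hn => ?_⟩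
  rw [cmd_eq_P d n hn]
  calc P d (n - d - 1) ≤ (d+1 : ℚ) * 2^(d*(n-d-1)) := P_bound d _ (by omega)
    _ ≤ (d+1 : ℚ) * 2^(d*n) := by
        apply mul_le_mul_of_nonneg_left _ (by positivity)
        exact pow_le_pow_right₀ (by norm_num : (1:ℚ) ≤ 2) (Nat.mul_le_mul_left d (by omega))
end
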